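/- For the orthonormal basis {E₁,...,E₈} = {A₁,A₂,A₃,A₄,B₁,B₂,C₁,C₂} of m ⊂ so(5) and the metric given by the standard inner product B = Σαᵢ² + Σβᵢ² + Σγᵢ², the sectional-curvature quantities R_{XYYX} = (1/4)B([X,Y]_m, [X,Y]_m) + B([X,Y]_{g_e}, [X,Y]_{g_e}) are all nonnegative; in particular R_{1221} = 1 (for X = A₁ = E_{13}, Y = A₂ = E_{14}) and R_{1551} = 1/4 (for X = A₁, Y = B₁ = E_{15}). -/

import Mathlib

open Matrix

/-- Elementary skew-symmetric matrix: `1` at `(i,j)`, `-1` at `(j,i)` (0-based indices). -/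
def E (i j : Fin 5) : Matrix (Fin 5) (Fin 5) ℝ :=
  Matrix.single i j 1 - Matrix.single j i 1

/-- `m = span{A₁,A₂,A₃,A₄,B₁,B₂,C₁,C₂}` (0-based: `A₁ = E 0 2`, `A₂ = E 0 3`,
`A₃ = E 1 2`, `A₄ = E 1 3`, `B₁ = E 0 4`, `B₂ = E 1 4`, `C₁ = E 2 4`, `C₂ = E 3 4`). -/
noncomputable def mm : Submodule ℝ (Matrix (Fin 5) (Fin 5) ℝ) :=
  Submodule.span ℝ {E 0 2, E 0 3, E 1 2, E 1 3, E 0 4, E 1 4, E 2 4, E 3 4}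

/-- The inner product making the elementary skew-symmetric matrices orthonormal:
`B X Y = tr (Xᵀ Y) / 2`. -/
noncomputable def B (X Y : Matrix (Fin 5) (Fin 5) ℝ) : ℝ :=
  Matrix.trace (Xᵀ * Y) / 2

/-- Projection onto `m` (kills the `g_e`-entries `(0,1),(1,0),(2,3),(3,2)`). -/
def projm (X : Matrix (Fin 5) (Fin 5) ℝ) : Matrix (Fin 5) (Fin 5) ℝ :=
  Matrix.of fun i j =>
    if (i = 0 ∧ j = 1) ∨ (i = 1 ∧ j = 0) ∨ (i = 2 ∧ j = 3) ∨ (i = 3 ∧ j = 2) then 0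
    else X i j

/-- Projection onto `g_e` (keeps only the entries `(0,1),(1,0),(2,3),(3,2)`). -/
def projge (X : Matrix (Fin 5) (Fin 5) ℝ) : Matrix (Fin 5) (Fin 5) ℝ :=
  Matrix.of fun i j =>
    if (i = 0 ∧ j = 1) ∨ (i = 1 ∧ j = 0) ∨ (i = 2 ∧ j = 3) ∨ (i = 3 ∧ j = 2) then X i j
    else 0

/-- The sectional-curvature quantity
`R(X,Y,Y,X) = (1/4) B(⁅X,Y⁆_m, ⁅X,Y⁆_m) + B(⁅X,Y⁆_{g_e}, ⁅X,Y⁆_{g_e})`. -/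
noncomputable def R (X Y : Matrix (Fin 5) (Fin 5) ℝ) : ℝ :=
  (1 / 4) * B (projm ⁅X, Y⁆) (projm ⁅X, Y⁆) + B (projge ⁅X, Y⁆) (projge ⁅X, Y⁆)

/-! `R X Y` is a positive combination of the `B`-norms of the two projections of `⁅X, Y⁆`,
hence nonnegative for all `X, Y`. For the two values, `⁅E i j, E i l⁆ = E l j`: so
`⁅A₁, A₂⁆ = E 3 2` lies in `g_e` and `⁅A₁, B₁⁆ = E 4 2` in `m`, both of `B`-norm `1`. -/

lemma B_self_nonneg (X : Matrix (Fin 5) (Fin 5) ℝ) : 0 ≤ B X X :=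
  div_nonneg (posSemidef_conjTranspose_mul_self X).trace_nonneg zero_le_two

lemma R_nonneg (X Y : Matrix (Fin 5) (Fin 5) ℝ) : 0 ≤ R X Y :=
  add_nonneg (mul_nonneg (by norm_num) (B_self_nonneg _)) (B_self_nonneg _)

lemma E_transpose (i j : Fin 5) : (E i j)ᵀ = E j i := by
  simp only [E, transpose_sub, transpose_single]

lemma E_mul_E_of_eq_left {i j l : Fin 5} (hij : i ≠ j) (hil : i ≠ l) (hjl : j ≠ l) :
    E i j * E i l = -single j l 1 := by
  simp [E, sub_mul, mul_sub, single_mul_single_of_ne, hil, hjl, hij.symm]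

lemma lie_E_of_eq_left {i j l : Fin 5} (hij : i ≠ j) (hil : i ≠ l) (hjl : j ≠ l) :
    ⁅E i j, E i l⁆ = E l j := by
  rw [Ring.lie_def, E_mul_E_of_eq_left hij hil hjl, E_mul_E_of_eq_left hil hij hjl.symm, E]
  abel

lemma B_E_self {i j : Fin 5} (hij : i ≠ j) : B (E i j) (E i j) = 1 := by
  rw [B, E_transpose]
  simp [E, sub_mul, mul_sub, single_mul_single_of_ne, hij, hij.symm]

lemma B_zero_zero : B 0 0 = 0 := by
  simp [B]

lemma projm_E_3_2 : projm (E 3 2) = 0 := by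
  ext a b; fin_cases a <;> fin_cases b <;> simp [projm, E, single_apply]

lemma projge_E_3_2 : projge (E 3 2) = E 3 2 := by
  ext a b; fin_cases a <;> fin_cases b <;> simp [projge, E, single_apply]

lemma projm_E_4_2 : projm (E 4 2) = E 4 2 := by
  ext a b; fin_cases a <;> fin_cases b <;> simp [projm, E, single_apply]

lemma projge_E_4_2 : projge (E 4 2) = 0 := by
  ext a b; fin_cases a <;> fin_cases b <;> simp [projge, E, single_apply]

/-- The sectional curvature quantities are nonnegative on `m`; in particular
`R_{1221} = 1` (for `X = A₁`, `Y = A₂`) and `R_{1551} = 1/4` (for `X = A₁`, `Y = B₁`). -/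
theorem sectional_curvature_nonneg :
    (∀ X ∈ mm, ∀ Y ∈ mm, 0 ≤ R X Y) ∧
    R (E 0 2) (E 0 3) = 1 ∧ R (E 0 2) (E 0 4) = 1 / 4 := by
  refine ⟨fun X _ Y _ => R_nonneg X Y, ?_, ?_⟩
  · rw [R, lie_E_of_eq_left (by decide) (by decide) (by decide), projm_E_3_2, projge_E_3_2,
      B_zero_zero, B_E_self (by decide)]
    norm_num
  · rw [R, lie_E_of_eq_left (by decide) (by decide) (by decide), projm_E_4_2, projge_E_4_2,
      B_zero_zero, B_E_self (by decide)]
    norm_num
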